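/- arXiv:math/0010261 — 2 statements merged into one kernel-verified Lean document; each statement's English description precedes it below -/
import Mathlib

section
/- Let X and Y be complete metric spaces and let E and F be nontrivial real normed vector spaces. Let C*_u(X,E) denote the space of bounded uniformly continuous functions from X to E, and C*_u(Y,F) the space of bounded uniformly continuous functions from Y to F. If there exists a biseparating map T : C*_u(X,E) → C*_u(Y,F), then X and Y are uniformly homeomorphic: there exists a homeomorphism h : Y → X such that both h and h⁻¹ are uniformly continuous. -/
open scoped BoundedContinuousFunction

/-- The space `C*ᵤ(X,E)` of bounded uniformly continuous functions from `X` to `E`,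
realized as the subtype of bounded continuous functions that are uniformly continuous. -/
def CuSpace (X E : Type*) [MetricSpace X] [NormedAddCommGroup E] : Type _ :=
  {f : X →ᵇ E // UniformContinuous f}

noncomputable instance {X E : Type*} [MetricSpace X] [NormedAddCommGroup E] :
    Add (CuSpace X E) :=
  ⟨fun f g => ⟨f.1 + g.1, by
    have : ⇑(f.1 + g.1) = fun x => f.1 x + g.1 x := rfl
    rw [this]
    exact f.2.add g.2⟩⟩

/-! For `y ∈ Y` call `x ∈ X` a support point of `T` at `y` if functions `g` with `(T g) y ≠ 0`
exist with support in any ball around `x`; separation makes any two such `g` overlap. To find it,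
pull back bumps `q n` shrinking to `y` and pick `x n` in the support of `T⁻¹ (q n)`. Splitting a
function into two pieces by a cutoff along a set `A`, additivity keeps one piece with nonzero image
at `y`, which forces `x n` eventually near `A` or eventually away from `A`; such a sequence is
Cauchy, and its limit is the support point. The support maps of `T` and `T⁻¹` are mutually
inverse. For sets `A`, `B` at positive distance, `T` of the cutoff of `T⁻¹ e` along `A` is a
uniformly continuous function equal to `e` over `A` and to `0` over `B`, so their preimages are at
positive distance; in metric spaces this forces uniform continuity. -/

open Filter Topology Uniformity Metric Set Function

section Sequences

theorem exists_strictMono_forall_lt_of_eventually {R : ℕ → ℕ → Prop}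
    (h : ∀ m, ∀ᶠ n in atTop, R m n) :
    ∃ φ : ℕ → ℕ, StrictMono φ ∧ ∀ i j, i < j → R (φ i) (φ j) := by
  obtain ⟨φ, -, hφ⟩ := exists_seq_of_forall_finset_exists (fun _ => True)
    (fun m n => m < n ∧ R m n) fun s _ =>
      let ⟨n, hn⟩ :=
        ((eventually_all_finset s).2 fun m _ => (eventually_gt_atTop m).and (h m)).exists
      ⟨n, trivial, hn⟩
  exact ⟨φ, fun i j hij => (hφ i j hij).1, fun i j hij => (hφ i j hij).2⟩

variable {Z : Type*} [PseudoMetricSpace Z]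

theorem cauchySeq_of_eventually_infDist_le_or_le {x : ℕ → Z}
    (h : ∀ (A : Set Z) (r : ℝ), 0 < r →
      (∀ᶠ n in atTop, infDist (x n) A ≤ 2 * r) ∨ ∀ᶠ n in atTop, r ≤ infDist (x n) A) :
    CauchySeq x := by
  rw [Metric.cauchySeq_iff]
  intro ε hε
  obtain ⟨m, hm⟩ : ∃ m, ∀ᶠ n in atTop, dist (x n) (x m) ≤ 2 * (ε / 5) := by
    by_contra! hfar
    have hsep : ∀ m, ∀ᶠ n in atTop, ε / 5 ≤ dist (x n) (x m) := fun m => by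
      simpa [infDist_singleton] using (h {x m} (ε / 5) (by positivity)).resolve_left
        fun hle => hfar m (hle.mono fun n hn => not_lt.2 (by rwa [infDist_singleton] at hn))
    obtain ⟨φ, hφ, hφsep⟩ := exists_strictMono_forall_lt_of_eventually hsep
    -- `A` holds the even terms of an `ε / 5`-separated subsequence: the even terms lie in `A`,
    -- the odd ones stay `ε / 5` away from it
    set A := range fun i => x (φ (2 * i))
    have hodd : StrictMono fun i => φ (2 * i + 1) := hφ.comp fun i j hij => by omega
    have heven : StrictMono fun i => φ (2 * i) := hφ.comp fun i j hij => by omega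
    rcases h A (ε / 15) (by positivity) with hnear | hfar'
    · obtain ⟨i, hi⟩ := (hodd.tendsto_atTop.eventually hnear).exists
      have : ε / 5 ≤ infDist (x (φ (2 * i + 1))) A := by
        refine (le_infDist (range_nonempty _)).2 ?_
        rintro _ ⟨j, rfl⟩
        rcases lt_or_gt_of_ne (show 2 * j ≠ 2 * i + 1 by omega) with hij | hij
        · exact hφsep _ _ hij
        · rw [dist_comm]; exact hφsep _ _ hij
      linarith
    · obtain ⟨i, hi⟩ := (heven.tendsto_atTop.eventually hfar').exists
      have : infDist (x (φ (2 * i))) A = 0 := infDist_zero_of_mem ⟨i, rfl⟩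
      linarith
  obtain ⟨N, hN⟩ := eventually_atTop.1 hm
  exact ⟨N, fun a ha b hb => by
    linarith [dist_triangle_right (x a) (x b) (x m), hN a ha, hN b hb]⟩

theorem exists_infinite_forall_le_dist {a b : ℕ → Z} {ε : ℝ} (h : ∀ n, ε ≤ dist (a n) (b n)) :
    ∃ I : Set ℕ, I.Infinite ∧ ∀ i ∈ I, ∀ j ∈ I, ε / 4 ≤ dist (a i) (b j) := by
  -- if the `b n` (or the `a n`) cluster in a ball of radius `ε / 4`, the indices landing there
  -- will do; otherwise a greedy extraction works
  by_cases hb : ∃ p, ∃ᶠ n in atTop, dist p (b n) < ε / 4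
  · obtain ⟨p, hp⟩ := hb
    refine ⟨{n | dist p (b n) < ε / 4}, Nat.frequently_atTop_iff_infinite.1 hp,
      fun i hi j hj => ?_⟩
    linarith [h i, dist_triangle (a i) (b j) (b i), dist_triangle (b j) p (b i),
      dist_comm p (b j), dist_nonneg (x := p) (y := b i), show dist p (b i) < ε / 4 from hi,
      show dist p (b j) < ε / 4 from hj]
  by_cases ha : ∃ p, ∃ᶠ n in atTop, dist p (a n) < ε / 4
  · obtain ⟨p, hp⟩ := ha
    refine ⟨{n | dist p (a n) < ε / 4}, Nat.frequently_atTop_iff_infinite.1 hp,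
      fun i hi j hj => ?_⟩
    linarith [h j, dist_triangle (a j) (a i) (b j), dist_triangle (a j) p (a i),
      dist_comm p (a j), dist_nonneg (x := p) (y := a i), show dist p (a i) < ε / 4 from hi,
      show dist p (a j) < ε / 4 from hj]
  simp only [not_exists, not_frequently, not_lt] at ha hb
  obtain ⟨φ, hφ, hφsep⟩ := exists_strictMono_forall_lt_of_eventually
    (R := fun m n => ε / 4 ≤ dist (a m) (b n) ∧ ε / 4 ≤ dist (a n) (b m))
    fun m => (hb (a m)).and ((ha (b m)).mono fun n hn => by rwa [dist_comm])
  refine ⟨range φ, infinite_range_of_injective hφ.injective, ?_⟩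
  rintro _ ⟨i, rfl⟩ _ ⟨j, rfl⟩
  rcases lt_trichotomy i j with hij | rfl | hij
  · exact (hφsep i j hij).1
  · linarith [h (φ i), dist_nonneg (x := a (φ i)) (y := b (φ i))]
  · exact (hφsep j i hij).2

theorem uniformContinuous_of_forall_le_dist {Y : Type*} [PseudoMetricSpace Y] {f : Y → Z}
    (hf : ∀ (A B : Set Z) (δ : ℝ), A.Nonempty → 0 < δ → (∀ a ∈ A, ∀ b ∈ B, δ ≤ dist a b) →
      ∃ η > 0, ∀ y y', f y ∈ A → f y' ∈ B → η ≤ dist y y') :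
    UniformContinuous f := by
  rw [Metric.uniformContinuous_iff]
  by_contra! hnot
  obtain ⟨ε, hε, hbad⟩ := hnot
  choose y y' hyy' hfar using fun n : ℕ => hbad (1 / (n + 1)) Nat.one_div_pos_of_nat
  obtain ⟨I, hI, hIsep⟩ := exists_infinite_forall_le_dist (a := f ∘ y) (b := f ∘ y') hfar
  obtain ⟨η, hη, hηsep⟩ := hf (f ∘ y '' I) (f ∘ y' '' I) (ε / 4) (hI.nonempty.image _)
    (by positivity) (by rintro _ ⟨i, hi, rfl⟩ _ ⟨j, hj, rfl⟩; exact hIsep i hi j hj)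
  obtain ⟨N, hN⟩ := exists_nat_one_div_lt hη
  obtain ⟨n, hn, hNn⟩ := hI.exists_gt N
  have hnN : 1 / ((n : ℝ) + 1) < 1 / ((N : ℝ) + 1) := by gcongr
  linarith [hηsep (y n) (y' n) ⟨n, hn, rfl⟩ ⟨n, hn, rfl⟩, hyy' n]

end Sequences

theorem uniformContinuous_iff_tendsto_sub {α β : Type*} [UniformSpace α] [UniformSpace β]
    [AddGroup β] [IsUniformAddGroup β] {f : α → β} :
    UniformContinuous f ↔ Tendsto (fun p : α × α => f p.2 - f p.1) (𝓤 α) (𝓝 0) := by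
  rw [UniformContinuous, uniformity_eq_comap_nhds_zero β, tendsto_comap_iff]; rfl

theorem UniformContinuous.smul_of_bounded {α 𝕜 E : Type*} [UniformSpace α] [NormedField 𝕜]
    [SeminormedAddCommGroup E] [NormedSpace 𝕜 E] {c : α → 𝕜} {u : α → E}
    (hc : UniformContinuous c) (hu : UniformContinuous u) (hcb : ∃ C, ∀ x, ‖c x‖ ≤ C)
    (hub : ∃ M, ∀ x, ‖u x‖ ≤ M) : UniformContinuous fun x => c x • u x := by
  obtain ⟨C, hC⟩ := hcb
  obtain ⟨M, hM⟩ := hub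
  rw [uniformContinuous_iff_tendsto_sub] at hc hu ⊢
  -- `c y • u y - c x • u x = (c y - c x) • u y + c x • (u y - u x)`
  have h₁ := hc.zero_smul_isBoundedUnder_le (g := fun p : α × α => u p.2)
    (isBoundedUnder_of ⟨M, fun p => hM p.2⟩)
  have h₂ := (isBoundedUnder_of ⟨C, fun p : α × α => hC p.1⟩).smul_tendsto_zero hu
  simpa [sub_smul, smul_sub] using h₁.add h₂

section Cutoff

variable {X : Type*} [PseudoMetricSpace X]

noncomputable def infDistCutoff (A : Set X) (r : ℝ) (z : X) : ℝ :=
  min 1 (max 0 (infDist z A / r - 1))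

theorem infDistCutoff_mem_Icc (A : Set X) (r : ℝ) (z : X) : infDistCutoff A r z ∈ Icc 0 1 :=
  ⟨le_min zero_le_one (le_max_left _ _), min_le_left _ _⟩

theorem uniformContinuous_infDistCutoff (A : Set X) (r : ℝ) :
    UniformContinuous (infDistCutoff A r) :=
  ((LipschitzWith.id.const_max 0).const_min 1).uniformContinuous.comp
    (((uniformContinuous_infDist_pt A).div_const' r).sub uniformContinuous_const)

theorem infDistCutoff_eq_zero {A : Set X} {r : ℝ} {z : X} (hr : 0 < r) (h : infDist z A ≤ r) :
    infDistCutoff A r z = 0 := by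
  have : infDist z A / r - 1 ≤ 0 := by rw [sub_nonpos, div_le_one hr]; exact h
  simp [infDistCutoff, max_eq_left this]

theorem infDistCutoff_eq_one {A : Set X} {r : ℝ} {z : X} (hr : 0 < r)
    (h : 2 * r ≤ infDist z A) : infDistCutoff A r z = 1 := by
  have : 1 ≤ infDist z A / r - 1 := by rw [le_sub_iff_add_le, le_div_iff₀ hr]; linarith
  simp [infDistCutoff, max_eq_right (zero_le_one.trans this), this]

end Cutoff

namespace CuSpace

variable {X E : Type*} [MetricSpace X] [NormedAddCommGroup E]

theorem ext {f g : CuSpace X E} (h : ∀ x, f.1 x = g.1 x) : f = g :=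
  Subtype.ext (BoundedContinuousFunction.ext h)

theorem add_apply (f g : CuSpace X E) (x : X) : (f + g).1 x = f.1 x + g.1 x := rfl

noncomputable def ofBounded (f : X → E) (hf : UniformContinuous f) (C : ℝ)
    (hC : ∀ x, ‖f x‖ ≤ C) : CuSpace X E :=
  ⟨.ofNormedAddCommGroup f hf.continuous C hC, hf⟩

noncomputable def const (e : E) : CuSpace X E :=
  ofBounded (fun _ => e) uniformContinuous_const ‖e‖ fun _ => le_rfl

@[simp]
theorem const_apply (e : E) (x : X) : (const e : CuSpace X E).1 x = e := rfl

variable [NormedSpace ℝ E]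

noncomputable def smul (c : X → ℝ) (hc : UniformContinuous c) (hc₁ : ∀ x, ‖c x‖ ≤ 1)
    (u : CuSpace X E) : CuSpace X E :=
  ofBounded (fun x => c x • u.1 x)
    (hc.smul_of_bounded u.2 ⟨1, hc₁⟩ ⟨_, u.1.norm_coe_le_norm⟩) ‖u.1‖ fun x =>
      (norm_smul_le _ _).trans <|
        (mul_le_of_le_one_left (norm_nonneg _) (hc₁ x)).trans (u.1.norm_coe_le_norm x)

@[simp]
theorem smul_apply (c : X → ℝ) (hc : UniformContinuous c) (hc₁ : ∀ x, ‖c x‖ ≤ 1)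
    (u : CuSpace X E) (x : X) : (smul c hc hc₁ u).1 x = c x • u.1 x := rfl

theorem exists_eq_add_support_subset (u : CuSpace X E) (A : Set X) {r : ℝ} (hr : 0 < r) :
    ∃ g₁ g₂ : CuSpace X E, u = g₁ + g₂ ∧ support g₁.1 ⊆ {z | infDist z A < 2 * r} ∧
      support g₂.1 ⊆ {z | r < infDist z A} := by
  have hc := uniformContinuous_infDistCutoff A r
  have hc₁ : ∀ z, ‖infDistCutoff A r z‖ ≤ 1 := fun z => by
    rw [Real.norm_eq_abs, abs_le]
    constructor <;> linarith [(infDistCutoff_mem_Icc A r z).1, (infDistCutoff_mem_Icc A r z).2]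
  have hc₁' : ∀ z, ‖1 - infDistCutoff A r z‖ ≤ 1 := fun z => by
    rw [Real.norm_eq_abs, abs_le]
    constructor <;> linarith [(infDistCutoff_mem_Icc A r z).1, (infDistCutoff_mem_Icc A r z).2]
  refine ⟨smul (fun z => 1 - infDistCutoff A r z) (uniformContinuous_const.sub hc) hc₁' u,
    smul (infDistCutoff A r) hc hc₁ u, ext fun z => ?_, fun z hz => ?_, fun z hz => ?_⟩
  · simp [add_apply, ← add_smul]
  · by_contra h
    simp [infDistCutoff_eq_one hr (not_lt.1 h)] at hz
  · by_contra h
    simp [infDistCutoff_eq_zero hr (not_lt.1 h)] at hz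

theorem exists_apply_eq_support_subset_ball (a : X) (e : E) {δ : ℝ} (hδ : 0 < δ) :
    ∃ p : CuSpace X E, p.1 a = e ∧ support p.1 ⊆ ball a δ := by
  obtain ⟨g₁, g₂, hsum, h₁, h₂⟩ := exists_eq_add_support_subset (const e) {a} (half_pos hδ)
  have hg₂ : g₂.1 a = 0 := notMem_support.1 fun ha => by
    have : δ / 2 < infDist a {a} := h₂ ha
    rw [infDist_singleton, dist_self] at this
    linarith
  refine ⟨g₁, by simpa [add_apply, hg₂] using (congrArg (fun f => f.1 a) hsum).symm,
    fun z hz => ?_⟩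
  simpa [infDist_singleton, mul_div_cancel₀] using h₁ hz

end CuSpace

theorem forall_norm_mul_norm_eq_zero_iff_disjoint_support {α β γ : Type*}
    [NormedAddCommGroup β] [NormedAddCommGroup γ] {f : α → β} {g : α → γ} :
    (∀ x, ‖f x‖ * ‖g x‖ = 0) ↔ Disjoint (support f) (support g) := by
  simp [Set.disjoint_left, or_iff_not_imp_left]

section Biseparating

variable {X Y E F : Type*} [MetricSpace X] [MetricSpace Y] [NormedAddCommGroup E]
  [NormedAddCommGroup F]

structure IsBiseparatingPair (T : CuSpace X E → CuSpace Y F) (S : CuSpace Y F → CuSpace X E) :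
    Prop where
  left_inv : LeftInverse S T
  right_inv : RightInverse S T
  map_add : ∀ f g, T (f + g) = T f + T g
  disjoint_support : ∀ f g : CuSpace X E, Disjoint (support f.1) (support g.1) →
    Disjoint (support (T f).1) (support (T g).1)
  disjoint_support_symm : ∀ p q : CuSpace Y F, Disjoint (support p.1) (support q.1) →
    Disjoint (support (S p).1) (support (S q).1)

def IsSupportPoint (T : CuSpace X E → CuSpace Y F) (y : Y) (x : X) : Prop :=
  ∀ ρ > 0, ∃ g : CuSpace X E, (T g).1 y ≠ 0 ∧ support g.1 ⊆ ball x ρ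

namespace IsBiseparatingPair

variable {T : CuSpace X E → CuSpace Y F} {S : CuSpace Y F → CuSpace X E}

theorem symm (hT : IsBiseparatingPair T S) : IsBiseparatingPair S T where
  left_inv := hT.right_inv
  right_inv := hT.left_inv
  map_add p q := hT.left_inv.injective <| by
    rw [hT.map_add, hT.right_inv, hT.right_inv, hT.right_inv]
  disjoint_support := hT.disjoint_support_symm
  disjoint_support_symm := hT.disjoint_support

theorem support_inter_nonempty (hT : IsBiseparatingPair T S) {f g : CuSpace X E} {y : Y}
    (hf : (T f).1 y ≠ 0) (hg : (T g).1 y ≠ 0) : (support f.1 ∩ support g.1).Nonempty :=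
  not_disjoint_iff_nonempty_inter.1 fun hfg =>
    disjoint_left.1 (hT.disjoint_support f g hfg) hf hg

theorem mem_closure_support (hT : IsBiseparatingPair T S) {y : Y} {x : X}
    (hx : IsSupportPoint T y x) {g : CuSpace X E} (hg : (T g).1 y ≠ 0) :
    x ∈ closure (support g.1) :=
  Metric.mem_closure_iff.2 fun δ hδ => by
    obtain ⟨g', hg', hsub⟩ := hx δ hδ
    obtain ⟨z, hz, hz'⟩ := hT.support_inter_nonempty hg hg'
    exact ⟨z, hz, by rw [dist_comm]; exact hsub hz'⟩

theorem apply_eq_zero_of_eqOn_ball (hT : IsBiseparatingPair T S) {y : Y} {x : X}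
    (hx : IsSupportPoint T y x) {g : CuSpace X E} {ρ : ℝ} (hρ : 0 < ρ)
    (hg : EqOn g.1 0 (ball x ρ)) : (T g).1 y = 0 := by
  by_contra h
  obtain ⟨z, hz, hxz⟩ := Metric.mem_closure_iff.1 (hT.mem_closure_support hx h) ρ hρ
  exact hz (hg (by rw [mem_ball, dist_comm]; exact hxz))

theorem exists_apply_ne_zero_closure_support_subset [NormedSpace ℝ E]
    (hT : IsBiseparatingPair T S) {u : CuSpace X E} {y : Y} (hu : (T u).1 y ≠ 0) (A : Set X)
    {r : ℝ} (hr : 0 < r) :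
    ∃ g : CuSpace X E, (T g).1 y ≠ 0 ∧ (closure (support g.1) ⊆ {z | infDist z A ≤ 2 * r} ∨
      closure (support g.1) ⊆ {z | r ≤ infDist z A}) := by
  obtain ⟨g₁, g₂, rfl, h₁, h₂⟩ := u.exists_eq_add_support_subset A hr
  rw [hT.map_add, CuSpace.add_apply] at hu
  by_cases hg₁ : (T g₁).1 y = 0
  · refine ⟨g₂, by simpa [hg₁] using hu, Or.inr ?_⟩
    exact closure_minimal (h₂.trans (ofPred_subset_ofPred.2 fun _ => le_of_lt))
      (isClosed_le continuous_const (continuous_infDist_pt A))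
  · refine ⟨g₁, hg₁, Or.inl ?_⟩
    exact closure_minimal (h₁.trans (ofPred_subset_ofPred.2 fun _ => le_of_lt))
      (isClosed_le (continuous_infDist_pt A) continuous_const)

theorem exists_support_subset_closure [NormedSpace ℝ E] [Nontrivial E]
    (hT : IsBiseparatingPair T S) {g : CuSpace X E} {y : Y} (hg : (T g).1 y ≠ 0) :
    ∃ r > 0, ∀ q : CuSpace Y F, support q.1 ⊆ ball y r →
      support (S q).1 ⊆ closure (support g.1) := by
  obtain ⟨r, hr, hball⟩ := Metric.isOpen_iff.1 (T g).1.continuous.isOpen_support y hg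
  refine ⟨r, hr, fun q hq x hx => Metric.mem_closure_iff.2 fun δ hδ => ?_⟩
  obtain ⟨e, he⟩ := exists_ne (0 : E)
  obtain ⟨p, hpx, hp⟩ := CuSpace.exists_apply_eq_support_subset_ball x e hδ
  -- `p = S (T p)` and `S q` overlap at `x`, so `T p` and `q` overlap near `y`
  obtain ⟨y', hpy', hqy'⟩ := not_disjoint_iff.1 fun hd => disjoint_left.1
    (hT.disjoint_support_symm _ _ hd) (by rwa [hT.left_inv p, mem_support, hpx]) hx
  obtain ⟨z, hpz, hgz⟩ := hT.support_inter_nonempty hpy' (hball (hq hqy'))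
  exact ⟨z, hgz, by rw [dist_comm]; exact hp hpz⟩

theorem exists_isSupportPoint [CompleteSpace X] [NormedSpace ℝ E] [NormedSpace ℝ F]
    [Nontrivial E] [Nontrivial F] (hT : IsBiseparatingPair T S) (y : Y) :
    ∃ x, IsSupportPoint T y x := by
  obtain ⟨e, he⟩ := exists_ne (0 : F)
  choose q hqy hq using fun n : ℕ =>
    CuSpace.exists_apply_eq_support_subset_ball y e (Nat.one_div_pos_of_nat (n := n))
  have hTq : ∀ n, (T (S (q n))).1 y ≠ 0 := fun n => by rwa [hT.right_inv, hqy]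
  choose x hx using fun n => hT.support_inter_nonempty (hTq n) (hTq n)
  have hclosure : ∀ g : CuSpace X E, (T g).1 y ≠ 0 →
      ∀ᶠ n in atTop, x n ∈ closure (support g.1) := by
    intro g hg
    obtain ⟨r, hr, hsub⟩ := hT.exists_support_subset_closure hg
    obtain ⟨N, hN⟩ := exists_nat_one_div_lt hr
    filter_upwards [eventually_ge_atTop N] with n hn
    refine hsub (q n) ((hq n).trans (ball_subset_ball ?_)) (hx n).1
    exact (Nat.one_div_le_one_div hn).trans hN.le
  -- cutting `S (q 0)` along `A`, one piece keeps a nonzero image at `y`, so `x n` eventually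
  -- stays near `A` or away from it
  obtain ⟨xs, hlim⟩ := cauchySeq_tendsto_of_complete <|
    cauchySeq_of_eventually_infDist_le_or_le fun A r hr => by
      obtain ⟨g, hg, h | h⟩ := hT.exists_apply_ne_zero_closure_support_subset (hTq 0) A hr
      exacts [Or.inl ((hclosure g hg).mono fun n hn => h hn),
        Or.inr ((hclosure g hg).mono fun n hn => h hn)]
  refine ⟨xs, fun ρ hρ => ?_⟩
  obtain ⟨g, hg, h | h⟩ :=
    hT.exists_apply_ne_zero_closure_support_subset (hTq 0) {xs} (by positivity : 0 < ρ / 4)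
  · refine ⟨g, hg, fun z hz => ?_⟩
    have : infDist z {xs} ≤ 2 * (ρ / 4) := h (subset_closure hz)
    rw [infDist_singleton] at this
    exact mem_ball.2 (by linarith)
  · have hnear := hlim.eventually (ball_mem_nhds xs (by positivity : 0 < ρ / 4))
    obtain ⟨n, hn, hn'⟩ := ((hclosure g hg).and hnear).exists
    have : ρ / 4 ≤ infDist (x n) {xs} := h hn
    rw [infDist_singleton] at this
    exact absurd (mem_ball.1 hn') this.not_gt

theorem eq_of_isSupportPoint_symm [NormedSpace ℝ F] [Nontrivial F]
    (hT : IsBiseparatingPair T S) {y y' : Y} {x : X} (hx : IsSupportPoint T y x)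
    (hy : IsSupportPoint S x y') : y' = y := by
  by_contra hne
  have hτ : 0 < dist y y' / 2 := half_pos (dist_pos.2 (Ne.symm hne))
  obtain ⟨e, he⟩ := exists_ne (0 : F)
  obtain ⟨q, hqy, hq⟩ := CuSpace.exists_apply_eq_support_subset_ball y e hτ
  obtain ⟨q', hq'x, hq'⟩ := hy _ hτ
  have hdisj : Disjoint (support (S q).1) (support (S q').1) :=
    hT.disjoint_support_symm q q' ((ball_disjoint_ball (by linarith)).mono hq hq')
  have hmem : x ∈ closure (support (S q).1) :=
    hT.mem_closure_support hx (by rwa [hT.right_inv, hqy])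
  exact disjoint_left.1 (hdisj.closure_left (S q').1.continuous.isOpen_support) hmem hq'x

variable [CompleteSpace X] [NormedSpace ℝ E] [NormedSpace ℝ F] [Nontrivial E] [Nontrivial F]

noncomputable def supportMap (hT : IsBiseparatingPair T S) (y : Y) : X :=
  (hT.exists_isSupportPoint y).choose

theorem isSupportPoint_supportMap (hT : IsBiseparatingPair T S) (y : Y) :
    IsSupportPoint T y (hT.supportMap y) :=
  (hT.exists_isSupportPoint y).choose_spec

theorem uniformContinuous_supportMap (hT : IsBiseparatingPair T S) :
    UniformContinuous hT.supportMap := by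
  obtain ⟨e, he⟩ := exists_ne (0 : F)
  refine uniformContinuous_of_forall_le_dist fun A B δ hA hδ hAB => ?_
  have hδ₃ : 0 < δ / 3 := by positivity
  obtain ⟨g₁, g₂, hsum, h₁, h₂⟩ := (S (CuSpace.const e)).exists_eq_add_support_subset A hδ₃
  have hgA : ∀ y, hT.supportMap y ∈ A → (T g₁).1 y = e := by
    intro y hy
    have hg₂ : (T g₂).1 y = 0 := by
      refine hT.apply_eq_zero_of_eqOn_ball (hT.isSupportPoint_supportMap y) hδ₃
        fun z hz => notMem_support.1 fun hz' => ?_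
      have : δ / 3 < infDist z A := h₂ hz'
      linarith [infDist_le_dist_of_mem (x := z) hy, mem_ball.1 hz]
    have := congrArg (fun f => (T f).1 y) hsum
    simpa [hT.right_inv _, hT.map_add, CuSpace.add_apply, hg₂] using this.symm
  have hgB : ∀ y, hT.supportMap y ∈ B → (T g₁).1 y = 0 := by
    intro y hy
    refine hT.apply_eq_zero_of_eqOn_ball (hT.isSupportPoint_supportMap y) hδ₃
      fun z hz => notMem_support.1 fun hz' => ?_
    have : infDist z A < 2 * (δ / 3) := h₁ hz'
    have : δ ≤ infDist (hT.supportMap y) A := (le_infDist hA).2 fun a ha => by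
      rw [dist_comm]; exact hAB a ha _ hy
    linarith [infDist_le_infDist_add_dist (s := A) (x := hT.supportMap y) (y := z),
      dist_comm z (hT.supportMap y), mem_ball.1 hz]
  obtain ⟨η, hη, hTg⟩ := Metric.uniformContinuous_iff.1 (T g₁).2 ‖e‖ (norm_pos_iff.2 he)
  refine ⟨η, hη, fun y y' hy hy' => not_lt.1 fun hyy' => ?_⟩
  have := hTg hyy'
  rw [hgA y hy, hgB y' hy', dist_zero_right] at this
  exact this.false

noncomputable def supportEquiv [CompleteSpace Y] (hT : IsBiseparatingPair T S) : Y ≃ X where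
  toFun := hT.supportMap
  invFun := hT.symm.supportMap
  left_inv y := hT.eq_of_isSupportPoint_symm (hT.isSupportPoint_supportMap y)
    (hT.symm.isSupportPoint_supportMap _)
  right_inv x := hT.symm.eq_of_isSupportPoint_symm (hT.symm.isSupportPoint_supportMap x)
    (hT.isSupportPoint_supportMap _)

end IsBiseparatingPair

end Biseparating

/-- If `X`, `Y` are complete metric spaces, `E`, `F` nontrivial real normed
spaces, and there exists a biseparating map `T : C*ᵤ(X,E) → C*ᵤ(Y,F)`, then `X` and `Y` are
uniformly homeomorphic. -/
theorem stmt_6 {X Y E F : Type*}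
    [MetricSpace X] [CompleteSpace X] [MetricSpace Y] [CompleteSpace Y]
    [NormedAddCommGroup E] [NormedSpace ℝ E] [Nontrivial E]
    [NormedAddCommGroup F] [NormedSpace ℝ F] [Nontrivial F]
    (T : CuSpace X E → CuSpace Y F)
    (hbij : Function.Bijective T)
    (hadd : ∀ f g : CuSpace X E, T (f + g) = T f + T g)
    (hsep : ∀ f g : CuSpace X E,
      (∀ x, ‖f.1 x‖ * ‖g.1 x‖ = 0) → ∀ y, ‖(T f).1 y‖ * ‖(T g).1 y‖ = 0)
    (hsep' : ∀ f g : CuSpace X E,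
      (∀ y, ‖(T f).1 y‖ * ‖(T g).1 y‖ = 0) → ∀ x, ‖f.1 x‖ * ‖g.1 x‖ = 0) :
    ∃ h : Y ≃ₜ X, UniformContinuous h ∧ UniformContinuous h.symm := by
  have hTS : RightInverse (surjInv hbij.2) T := rightInverse_surjInv hbij.2
  have hT : IsBiseparatingPair T (surjInv hbij.2) :=
    { left_inv := leftInverse_surjInv hbij
      right_inv := hTS
      map_add := hadd
      disjoint_support := fun f g hfg =>
        forall_norm_mul_norm_eq_zero_iff_disjoint_support.1 <|
          hsep f g (forall_norm_mul_norm_eq_zero_iff_disjoint_support.2 hfg)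
      disjoint_support_symm := fun p q hpq =>
        forall_norm_mul_norm_eq_zero_iff_disjoint_support.1 <| hsep' _ _ <| by
          rw [hTS p, hTS q]; exact forall_norm_mul_norm_eq_zero_iff_disjoint_support.2 hpq }
  exact ⟨⟨hT.supportEquiv, hT.uniformContinuous_supportMap.continuous,
    hT.symm.uniformContinuous_supportMap.continuous⟩, hT.uniformContinuous_supportMap,
    hT.symm.uniformContinuous_supportMap⟩
end

section
/- Let X and Y be Tychonoff (completely regular Hausdorff) spaces and let E and F be nontrivial real normed vector spaces, and let T : C(X,E) → C(Y,F) be a biseparating map. Then for every y ∈ Y, every support point of y in StoneCech X belongs to the realcompactification υX; that is, for every continuous function g : X → ℝ, the unique continuous extension to StoneCech X of the composition of g with the embedding ℝ ↪ OnePoint ℝ takes a value different from the point at infinity at each support point of y. -/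
/-!
Suppose the extension of `g` takes the value `∞` at a support point of `y`. Then every `u` with
`(T u) y ≠ 0` has points in its support where `|g|` is arbitrarily large: otherwise `u` would be
disjoint from some `f` supported in `{m < |g|}` with `(T f) y ≠ 0`.

Cut a function `f` with `(T f) y ≠ 0` along `|g|` into the pieces `f_N = tent_N (|g|) • f`; the
pieces with `N` of a fixed parity have pairwise disjoint supports. For a parity class with
`p = ∑ f_N` and `(T p) y ≠ 0`, put `q = ∑ N • f_N`. By separation, `(T f_N) y' ≠ 0` forces
`(T p) y' = (T f_N) y'` and `(T q) y' = N • (T f_N) y'`, so on a neighbourhood `V` of `y` on which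
`T p` and `T q` stay close to their values at `y`, only pieces with bounded `N` are seen. Yet
`u = T⁻¹ w`, with `w` supported in `V`, has support inside the closure of the support of `p` and
reaching arbitrarily large `|g|`, which produces a piece with `N` large seen at a point of `V`.
-/

open OnePoint

/-- `x ∈ StoneCech X` is a support point of `y ∈ Y` (relative to a map
`T : C(X,E) → C(Y,F)`) if for every open neighborhood `U` of `x` in `StoneCech X` there is
`f ∈ C(X,E)` with cozero set contained in `ι_X⁻¹(U)` and `(Tf)(y) ≠ 0`. -/
def IsSupportPointC {X Y E F : Type*} [TopologicalSpace X] [TopologicalSpace Y]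
    [TopologicalSpace E] [TopologicalSpace F] [Zero E] [Zero F]
    (T : C(X, E) → C(Y, F)) (y : Y) (x : StoneCech X) : Prop :=
  ∀ U : Set (StoneCech X), IsOpen U → x ∈ U →
    ∃ f : C(X, E), {x' : X | f x' ≠ 0} ⊆ stoneCechUnit ⁻¹' U ∧ T f y ≠ 0

open Function Set

noncomputable def tent (N : ℕ) (t : ℝ) : ℝ := max 0 (1 - |t - N|)

lemma continuous_tent (N : ℕ) : Continuous (tent N) := by unfold tent; fun_prop

lemma abs_sub_lt_one_of_tent_ne_zero {N : ℕ} {t : ℝ} (h : tent N t ≠ 0) : |t - N| < 1 := by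
  by_contra! h'
  exact h (max_eq_left (by linarith))

lemma tent_eq_zero_of_one_le_abs_sub {N : ℕ} {t : ℝ} (h : 1 ≤ |t - N|) : tent N t = 0 :=
  max_eq_left (by linarith)

lemma tent_add_tent_succ {K : ℕ} {t : ℝ} (h₁ : K ≤ t) (h₂ : t ≤ K + 1) :
    tent K t + tent (K + 1) t = 1 := by
  unfold tent
  push_cast
  rw [abs_of_nonneg (by linarith), abs_of_nonpos (by linarith),
    max_eq_right (by linarith), max_eq_right (by linarith)]
  ring

lemma tent_eq_zero_of_ne_floor {t : ℝ} (ht : 0 ≤ t) {N : ℕ} (h₀ : N ≠ ⌊t⌋₊)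
    (h₁ : N ≠ ⌊t⌋₊ + 1) : tent N t = 0 := by
  have hK : (⌊t⌋₊ : ℝ) ≤ t := Nat.floor_le ht
  have hK' : t < ⌊t⌋₊ + 1 := Nat.lt_floor_add_one t
  apply tent_eq_zero_of_one_le_abs_sub
  rcases Nat.lt_or_gt_of_ne h₀ with h | h
  · have : (N : ℝ) + 1 ≤ ⌊t⌋₊ := by exact_mod_cast h
    rw [abs_of_nonneg (by linarith)]
    linarith
  · have : (⌊t⌋₊ : ℝ) + 2 ≤ N := by exact_mod_cast (by omega : ⌊t⌋₊ + 2 ≤ N)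
    rw [abs_of_nonpos (by linarith)]
    linarith

lemma tent_two_mul_add_eq_zero_of_ne {k M M' : ℕ} {t : ℝ} (hM : M' ≠ M)
    (h : tent (2 * M + k) t ≠ 0) : tent (2 * M' + k) t = 0 := by
  apply tent_eq_zero_of_one_le_abs_sub
  have h₁ := abs_sub_lt_one_of_tent_ne_zero h
  have h₂ : (1 : ℝ) ≤ |(M' : ℝ) - M| := by
    have : (1 : ℤ) ≤ |(M' : ℤ) - M| := Int.one_le_abs (by omega)
    exact_mod_cast this
  have h₃ := abs_sub_le ((2 * M' + k : ℕ) : ℝ) t ((2 * M + k : ℕ) : ℝ)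
  have h₄ : ((2 * M' + k : ℕ) : ℝ) - ((2 * M + k : ℕ) : ℝ) = 2 * ((M' : ℝ) - M) := by
    push_cast; ring
  rw [h₄, abs_mul, abs_two, abs_sub_comm _ t] at h₃
  linarith

lemma finsum_tent_two_mul_add {t : ℝ} (ht : 0 ≤ t) {k N : ℕ} (hN : N % 2 = k)
    (hNt : N = ⌊t⌋₊ ∨ N = ⌊t⌋₊ + 1) : ∑ᶠ M, tent (2 * M + k) t = tent N t := by
  rw [finsum_eq_single _ (N / 2) fun M hM => tent_eq_zero_of_ne_floor ht (by omega) (by omega)]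
  congr 1
  omega

lemma finsum_tent_even_add_finsum_tent_odd {t : ℝ} (ht : 0 ≤ t) :
    ∑ᶠ M, tent (2 * M + 0) t + ∑ᶠ M, tent (2 * M + 1) t = 1 := by
  have hK : (⌊t⌋₊ : ℝ) ≤ t := Nat.floor_le ht
  have hK' : t ≤ ⌊t⌋₊ + 1 := (Nat.lt_floor_add_one t).le
  rcases Nat.mod_two_eq_zero_or_one ⌊t⌋₊ with h | h
  · rw [finsum_tent_two_mul_add ht h (.inl rfl),
      finsum_tent_two_mul_add ht (N := ⌊t⌋₊ + 1) (by omega) (.inr rfl)]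
    exact tent_add_tent_succ hK hK'
  · rw [finsum_tent_two_mul_add ht (N := ⌊t⌋₊ + 1) (by omega) (.inr rfl),
      finsum_tent_two_mul_add ht h (.inl rfl), add_comm]
    exact tent_add_tent_succ hK hK'

lemma locallyFinite_support_tent : LocallyFinite fun N : ℕ => support (tent N) := by
  intro t
  refine ⟨Metric.ball t 1, Metric.ball_mem_nhds t one_pos,
    (Set.finite_lt_nat ⌈t + 2⌉₊).subset ?_⟩
  rintro N ⟨s, hsN, hst⟩
  have h₁ := abs_lt.1 (abs_sub_lt_one_of_tent_ne_zero hsN)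
  have h₂ := abs_lt.1 (Real.dist_eq s t ▸ Metric.mem_ball.1 hst)
  exact Nat.lt_ceil.2 (by linarith [h₁.1, h₂.2])

namespace ContinuousMap

variable {X E : Type*} [TopologicalSpace X] [NormedAddCommGroup E] [NormedSpace ℝ E]

noncomputable def tentPiece (g : C(X, ℝ)) (f : C(X, E)) (N : ℕ) : C(X, E) :=
  ⟨fun x => tent N |g x| • f x,
    ((continuous_tent N).comp (continuous_abs.comp g.continuous)).smul f.continuous⟩

/-- `∑ M, c M • tentPiece g f (2 * M + k)`: the pieces of parity `k`, whose supports are pairwise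
disjoint. -/
noncomputable def tentSum (g : C(X, ℝ)) (f : C(X, E)) (k : ℕ) (c : ℕ → ℕ) : C(X, E) :=
  ⟨fun x => (∑ᶠ M, (c M : ℝ) * tent (2 * M + k) |g x|) • f x, by
    have hg : Continuous fun x => |g x| := continuous_abs.comp g.continuous
    have hfin : LocallyFinite fun M => support fun x => (c M : ℝ) * tent (2 * M + k) |g x| :=
      ((locallyFinite_support_tent.comp_injective fun _ _ h => by omega).preimage_continuous
        hg).subset fun M => support_mul_subset_right _ _
    exact (continuous_finsum (fun M => continuous_const.mul ((continuous_tent _).comp hg))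
      hfin).smul f.continuous⟩

variable {g : C(X, ℝ)} {f : C(X, E)}

lemma tentSum_apply (k : ℕ) (c : ℕ → ℕ) (x : X) :
    tentSum g f k c x = (∑ᶠ M, (c M : ℝ) * tent (2 * M + k) |g x|) • f x := rfl

lemma abs_lt_of_tentPiece_ne_zero {N : ℕ} {x : X} (h : tentPiece g f N x ≠ 0) :
    |g x| < N + 1 := by
  have := abs_lt.1 (abs_sub_lt_one_of_tent_ne_zero (left_ne_zero_of_smul h))
  linarith [this.2]

lemma tentSum_eqOn (k : ℕ) (c : ℕ → ℕ) (M : ℕ) :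
    EqOn (tentSum g f k c) (c M • tentPiece g f (2 * M + k))
      (support (tentPiece g f (2 * M + k))) := by
  intro x hx
  have ht := left_ne_zero_of_smul hx
  rw [tentSum_apply, finsum_eq_single _ M fun M' hM' => by
    rw [tent_two_mul_add_eq_zero_of_ne hM' ht, mul_zero], mul_smul, Nat.cast_smul_eq_nsmul]
  rfl

lemma exists_tentPiece_apply_ne_zero {k : ℕ} {c : ℕ → ℕ} {x : X}
    (h : tentSum g f k c x ≠ 0) : ∃ M, tentPiece g f (2 * M + k) x ≠ 0 := by
  rw [tentSum_apply] at h
  obtain ⟨M, hM⟩ : ∃ M, (c M : ℝ) * tent (2 * M + k) |g x| ≠ 0 := by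
    by_contra! h'
    exact h (by rw [finsum_eq_zero_of_forall_eq_zero h', zero_smul])
  exact ⟨M, smul_ne_zero (right_ne_zero_of_mul hM) (right_ne_zero_of_smul h)⟩

lemma tentSum_zero_add_tentSum_one : tentSum g f 0 1 + tentSum g f 1 1 = f := by
  ext x
  simp only [add_apply, tentSum_apply, Pi.one_apply, Nat.cast_one, one_mul, ← add_smul,
    finsum_tent_even_add_finsum_tent_odd (abs_nonneg _), one_smul]

end ContinuousMap

section Separating

variable {X Y E F : Type*} [TopologicalSpace X] [TopologicalSpace Y]
  [NormedAddCommGroup E] [NormedAddCommGroup F]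

lemma forall_norm_mul_norm_eq_zero_iff {α : Type*} {u : α → E} {v : α → F} :
    (∀ a, ‖u a‖ * ‖v a‖ = 0) ↔ Disjoint (support u) (support v) := by
  simp only [Set.disjoint_left, mem_support, mul_eq_zero, norm_eq_zero, ne_eq, not_not]
  exact forall_congr' fun a => or_iff_not_imp_left

abbrev PreservesDisjointSupports (T : C(X, E) → C(Y, F)) : Prop :=
  ∀ f g : C(X, E), Disjoint (support f) (support g) → Disjoint (support (T f)) (support (T g))

abbrev ReflectsDisjointSupports (T : C(X, E) → C(Y, F)) : Prop :=
  ∀ f g : C(X, E), Disjoint (support (T f)) (support (T g)) → Disjoint (support f) (support g)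

variable {T : C(X, E) → C(Y, F)}

lemma ReflectsDisjointSupports.exists_apply_ne_zero (hT : ReflectsDisjointSupports T)
    {f g : C(X, E)} {x : X} (hf : f x ≠ 0) (hg : g x ≠ 0) : ∃ y, T f y ≠ 0 ∧ T g y ≠ 0 := by
  by_contra! h
  exact Set.disjoint_left.1 (hT f g (Set.disjoint_left.2 fun y hfy hgy => hgy (h y hfy))) hf hg

lemma PreservesDisjointSupports.apply_eq_nsmul (hadd : ∀ f g, T (f + g) = T f + T g)
    (hT : PreservesDisjointSupports T) {h p : C(X, E)} (n : ℕ) (hhp : EqOn h (n • p) (support p))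
    {y : Y} (hp : T p y ≠ 0) : T h y = n • T p y := by
  have hdisj : Disjoint (support p) (support (h - n • p)) :=
    Set.disjoint_left.2 fun x hx hx' => hx' (sub_eq_zero.2 (hhp hx))
  have hrest : T (h - n • p) y = 0 := by
    by_contra hne
    exact Set.disjoint_left.1 (hT _ _ hdisj) hp hne
  calc T h y = T (n • p + (h - n • p)) y := by rw [add_sub_cancel]
    _ = n • T p y := by
      have hnsmul : T (n • p) = n • T p := map_nsmul (AddMonoidHom.mk' T hadd) n p
      rw [hadd, ContinuousMap.add_apply, hrest, add_zero, hnsmul]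
      rfl

lemma ContinuousMap.exists_apply_ne_zero_support_subset_diff [CompletelyRegularSpace X]
    [NormedSpace ℝ E] {K : Set X} (hK : IsClosed K) {x : X} (hx : x ∉ K) {u : C(X, E)}
    (hu : u x ≠ 0) : ∃ e : C(X, E), e x ≠ 0 ∧ support e ⊆ support u \ K := by
  obtain ⟨φ, hφ, hφx, hφK⟩ := CompletelyRegularSpace.completely_regular x K hK hx
  refine ⟨⟨fun x' => (1 - (φ x' : ℝ)) • u x', by fun_prop⟩, by simpa [hφx] using hu, ?_⟩
  intro x' hx'
  refine ⟨right_ne_zero_of_smul hx', fun hx'K => hx' ?_⟩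
  simp [hφK hx'K]

lemma Function.Surjective.exists_apply_ne_zero_support_subset [CompletelyRegularSpace Y]
    [NormedSpace ℝ F] [Nontrivial F] (hT : Surjective T) {V : Set Y} (hV : IsOpen V) {y : Y}
    (hy : y ∈ V) : ∃ u, T u y ≠ 0 ∧ support (T u) ⊆ V := by
  obtain ⟨w₀, hw₀⟩ := exists_ne (0 : F)
  obtain ⟨w, hwy, hw⟩ := ContinuousMap.exists_apply_ne_zero_support_subset_diff hV.isClosed_compl
    (not_not.2 hy) (u := ContinuousMap.const Y w₀) hw₀
  obtain ⟨u, rfl⟩ := hT w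
  exact ⟨u, hwy, fun y' hy' => not_not.1 (hw hy').2⟩

lemma support_subset_closure_support [CompletelyRegularSpace X] [NormedSpace ℝ E]
    (hT : PreservesDisjointSupports T) (hT' : ReflectsDisjointSupports T) {h u : C(X, E)}
    {W : Set Y} (hW : ∀ y ∈ W, T h y ≠ 0) (hu : support (T u) ⊆ W) :
    support u ⊆ closure (support h) := by
  intro x hx
  by_contra hcl
  obtain ⟨e, hex, he⟩ :=
    ContinuousMap.exists_apply_ne_zero_support_subset_diff isClosed_closure hcl hx
  have hdisj : Disjoint (support e) (support h) :=
    Set.disjoint_left.2 fun x' hx' hx'h => (he hx').2 (subset_closure hx'h)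
  obtain ⟨y, hey, huy⟩ := hT'.exists_apply_ne_zero hex hx
  exact Set.disjoint_left.1 (hT e h hdisj) hey (hW y (hu huy))

end Separating

section Biseparating

open ContinuousMap

variable {X Y E F : Type*} [TopologicalSpace X] [TopologicalSpace Y]
  [NormedAddCommGroup E] [NormedAddCommGroup F] {T : C(X, E) → C(Y, F)}

lemma natCast_mul_norm_lt_of_norm_sub_lt [NormedSpace ℝ F] {a θ z : F} {n : ℕ}
    (ha : ‖a - θ‖ < ‖θ‖ / 2) (hz : ‖n • a - z‖ < 1) : n * ‖θ‖ < 2 * (‖z‖ + 1) := by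
  have hθa : ‖θ‖ / 2 < ‖a‖ := by linarith [norm_sub_norm_le θ a, norm_sub_rev a θ]
  have hna : n * ‖a‖ < ‖z‖ + 1 := by
    have hnorm : ‖n • a‖ = n * ‖a‖ := by
      rw [← Nat.cast_smul_eq_nsmul ℝ, norm_smul, Real.norm_natCast]
    linarith [norm_sub_norm_le (n • a) z]
  nlinarith [(Nat.cast_nonneg n : (0 : ℝ) ≤ n)]

lemma exists_tentPiece_apply_ne_zero_of_unbounded [CompletelyRegularSpace X]
    [CompletelyRegularSpace Y] [NormedSpace ℝ E] [NormedSpace ℝ F] [Nontrivial F]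
    (hsurj : Surjective T) (hT : PreservesDisjointSupports T) (hT' : ReflectsDisjointSupports T)
    {g : C(X, ℝ)} {y : Y} (hunbdd : ∀ u, T u y ≠ 0 → ∀ m : ℝ, ∃ x ∈ support u, m < |g x|)
    {f : C(X, E)} {k : ℕ} {V : Set Y} (hV : IsOpen V) (hyV : y ∈ V)
    (hV₀ : ∀ y' ∈ V, T (tentSum g f k 1) y' ≠ 0) (m : ℝ) :
    ∃ M : ℕ, m < (2 * M + k : ℕ) + 1 ∧ ∃ y' ∈ V, T (tentPiece g f (2 * M + k)) y' ≠ 0 := by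
  obtain ⟨u, huy, huV⟩ := hsurj.exists_apply_ne_zero_support_subset hV hyV
  have hcl := support_subset_closure_support hT hT' hV₀ huV
  obtain ⟨x, hxu, hxg⟩ := hunbdd u huy m
  have hO : IsOpen (support u ∩ {x | m < |g x|}) :=
    u.continuous.isOpen_support.inter (isOpen_lt continuous_const (by fun_prop))
  obtain ⟨x', ⟨hx'u, hx'g⟩, hx'p⟩ := mem_closure_iff.1 (hcl hxu) _ hO ⟨hxu, hxg⟩
  obtain ⟨M, hM⟩ := exists_tentPiece_apply_ne_zero hx'p
  obtain ⟨y', hMy', huy'⟩ := hT'.exists_apply_ne_zero hM hx'u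
  have hx'g : m < |g x'| := hx'g
  exact ⟨M, by linarith [abs_lt_of_tentPiece_ne_zero hM], y', huV huy', hMy'⟩

theorem exists_apply_ne_zero_forall_mem_support_abs_le [CompletelyRegularSpace X]
    [CompletelyRegularSpace Y] [NormedSpace ℝ E] [NormedSpace ℝ F] [Nontrivial F]
    (hsurj : Surjective T) (hadd : ∀ f g, T (f + g) = T f + T g)
    (hT : PreservesDisjointSupports T) (hT' : ReflectsDisjointSupports T) (g : C(X, ℝ)) (y : Y) :
    ∃ u, T u y ≠ 0 ∧ ∃ m : ℝ, ∀ x ∈ support u, |g x| ≤ m := by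
  by_contra! hunbdd
  obtain ⟨f, hfy, -⟩ := hsurj.exists_apply_ne_zero_support_subset isOpen_univ (mem_univ y)
  obtain ⟨k, hk⟩ : ∃ k, T (tentSum g f k 1) y ≠ 0 := by
    by_contra! h
    apply hfy
    rw [← tentSum_zero_add_tentSum_one (g := g) (f := f), hadd, ContinuousMap.add_apply, h, h,
      add_zero]
  set p := tentSum g f k 1
  set q := tentSum g f k fun M => 2 * M + k
  set V := {y' | ‖T p y' - T p y‖ < ‖T p y‖ / 2} ∩ {y' | ‖T q y' - T q y‖ < 1}
  have hV : IsOpen V :=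
    (isOpen_lt (by fun_prop) continuous_const).inter (isOpen_lt (by fun_prop) continuous_const)
  have hpos : 0 < ‖T p y‖ := norm_pos_iff.2 hk
  have hyV : y ∈ V := ⟨by simpa using half_pos hpos, by simp⟩
  have hV₀ : ∀ y' ∈ V, T p y' ≠ 0 := fun y' hy' h => by
    have h₁ : ‖T p y' - T p y‖ < ‖T p y‖ / 2 := hy'.1
    rw [h, zero_sub, norm_neg] at h₁
    linarith
  obtain ⟨M, hM, y', hy'V, hy'⟩ := exists_tentPiece_apply_ne_zero_of_unbounded hsurj hT hT'
    hunbdd hV hyV hV₀ (2 * (‖T q y‖ + 1) / ‖T p y‖ + 1)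
  have hpy' : T p y' = T (tentPiece g f (2 * M + k)) y' := by
    simpa using hT.apply_eq_nsmul hadd 1 (by simpa using tentSum_eqOn (g := g) (f := f) k 1 M) hy'
  have hqy' : T q y' = (2 * M + k) • T (tentPiece g f (2 * M + k)) y' :=
    hT.apply_eq_nsmul hadd _ (tentSum_eqOn k _ M) hy'
  have h₁ : ‖T p y' - T p y‖ < ‖T p y‖ / 2 := hy'V.1
  have h₂ : ‖T q y' - T q y‖ < 1 := hy'V.2
  rw [hpy'] at h₁
  rw [hqy'] at h₂
  have hlt := natCast_mul_norm_lt_of_norm_sub_lt h₁ h₂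
  have hgt : 2 * (‖T q y‖ + 1) < (2 * M + k : ℕ) * ‖T p y‖ :=
    (div_lt_iff₀ hpos).1 (by linarith)
  linarith

end Biseparating

lemma IsSupportPointC.exists_support_subset_lt_abs {X Y E F : Type*} [TopologicalSpace X]
    [TopologicalSpace Y] [TopologicalSpace E] [TopologicalSpace F] [Zero E] [Zero F]
    {T : C(X, E) → C(Y, F)} {y : Y} {x : StoneCech X} (hx : IsSupportPointC T y x)
    {g : C(X, ℝ)} (hg : stoneCechExtend (OnePoint.continuous_coe.comp g.continuous) x = ∞)
    (m : ℝ) : ∃ f : C(X, E), support f ⊆ {x' | m < |g x'|} ∧ T f y ≠ 0 := by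
  have hU : IsOpen ((((↑) : ℝ → OnePoint ℝ) '' Metric.closedBall 0 m)ᶜ) :=
    isOpen_compl_image_coe.2 ⟨Metric.isClosed_closedBall, isCompact_closedBall 0 m⟩
  obtain ⟨f, hf, hfy⟩ := hx (stoneCechExtend (continuous_coe.comp g.continuous) ⁻¹' _)
    (hU.preimage (continuous_stoneCechExtend _))
    (by rw [mem_preimage, hg]; exact infty_notMem_image_coe)
  refine ⟨f, fun x' hx' => ?_, hfy⟩
  have hx'U := hf hx'
  rw [mem_preimage, mem_preimage, stoneCechExtend_stoneCechUnit, mem_compl_iff] at hx'U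
  show m < |g x'|
  by_contra hle
  exact hx'U (mem_image_of_mem _ (by simpa using not_lt.1 hle))

lemma PreservesDisjointSupports.exists_mem_support_lt_abs {X Y E F : Type*} [TopologicalSpace X]
    [TopologicalSpace Y] [NormedAddCommGroup E] [NormedAddCommGroup F] {T : C(X, E) → C(Y, F)}
    (hT : PreservesDisjointSupports T) {g : X → ℝ} {y : Y}
    (hfar : ∀ m : ℝ, ∃ f : C(X, E), support f ⊆ {x | m < |g x|} ∧ T f y ≠ 0)
    {u : C(X, E)} (hu : T u y ≠ 0) (m : ℝ) : ∃ x ∈ support u, m < |g x| := by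
  obtain ⟨f, hf, hfy⟩ := hfar m
  by_contra! h
  exact Set.disjoint_left.1
    (hT u f (Set.disjoint_left.2 fun x hxu hxf => (h x hxu).not_gt (hf hxf))) hu hfy

theorem stmt_17_general {X Y E F : Type*}
    [TopologicalSpace X] [T35Space X] [TopologicalSpace Y] [T35Space Y]
    [NormedAddCommGroup E] [NormedSpace ℝ E]
    [NormedAddCommGroup F] [NormedSpace ℝ F] [Nontrivial F]
    (T : C(X, E) → C(Y, F))
    (hbij : Function.Bijective T)
    (hadd : ∀ f g : C(X, E), T (f + g) = T f + T g)
    (hsep : ∀ f g : C(X, E), (∀ x, ‖f x‖ * ‖g x‖ = 0) → ∀ y, ‖T f y‖ * ‖T g y‖ = 0)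
    (hsep' : ∀ f g : C(X, E), (∀ y, ‖T f y‖ * ‖T g y‖ = 0) → ∀ x, ‖f x‖ * ‖g x‖ = 0) :
    ∀ (y : Y) (x : StoneCech X), IsSupportPointC T y x →
      ∀ g : C(X, ℝ),
        stoneCechExtend (OnePoint.continuous_coe.comp g.continuous) x ≠ (∞ : OnePoint ℝ) := by
  intro y x hx g hg
  have hT : PreservesDisjointSupports T := fun f g h =>
    forall_norm_mul_norm_eq_zero_iff.1 (hsep f g (forall_norm_mul_norm_eq_zero_iff.2 h))
  have hT' : ReflectsDisjointSupports T := fun f g h =>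
    forall_norm_mul_norm_eq_zero_iff.1 (hsep' f g (forall_norm_mul_norm_eq_zero_iff.2 h))
  obtain ⟨u, hu, m, hm⟩ := exists_apply_ne_zero_forall_mem_support_abs_le hbij.2 hadd hT hT' g y
  obtain ⟨x', hx'u, hx'g⟩ :=
    hT.exists_mem_support_lt_abs (hx.exists_support_subset_lt_abs hg) hu m
  exact (hm x' hx'u).not_gt hx'g

/-- For a biseparating `T : C(X,E) → C(Y,F)` with `E`, `F` nontrivial, every
support point of every `y ∈ Y` belongs to the realcompactification `υX ⊆ StoneCech X`. -/
theorem stmt_17 {X Y E F : Type*}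
    [TopologicalSpace X] [T35Space X] [TopologicalSpace Y] [T35Space Y]
    [NormedAddCommGroup E] [NormedSpace ℝ E] [Nontrivial E]
    [NormedAddCommGroup F] [NormedSpace ℝ F] [Nontrivial F]
    (T : C(X, E) → C(Y, F))
    (hbij : Function.Bijective T)
    (hadd : ∀ f g : C(X, E), T (f + g) = T f + T g)
    (hsep : ∀ f g : C(X, E), (∀ x, ‖f x‖ * ‖g x‖ = 0) → ∀ y, ‖T f y‖ * ‖T g y‖ = 0)
    (hsep' : ∀ f g : C(X, E), (∀ y, ‖T f y‖ * ‖T g y‖ = 0) → ∀ x, ‖f x‖ * ‖g x‖ = 0) :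
    ∀ (y : Y) (x : StoneCech X), IsSupportPointC T y x →
      ∀ g : C(X, ℝ),
        stoneCechExtend (OnePoint.continuous_coe.comp g.continuous) x ≠ (∞ : OnePoint ℝ) :=
  stmt_17_general T hbij hadd hsep hsep'
end
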